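/- arXiv:1805.08012 — 2 statements merged into one kernel-verified Lean document; each statement's English description precedes it below -/
import Mathlib

section
/- Suppose ‖u‖² = Σ_{i=1}^{k} D_i + C where D_i ≥ 0 and C ≥ 0, and suppose D_i ≤ ‖u‖^{2p_i}/S_i^{p_i} and C ≤ ‖u‖^{q}/S^{q/2} with S_i, S > 0, q > 2, p_i > q/2. If ‖u‖ > 0, then either ‖u‖ ≥ κ^{1/(2−2p₁)} or ‖u‖ ≥ κ^{1/(2−q)}, where κ = S^{−q/2} + Σᵢ S_i^{−p_i} and p₁ = max_i p_i, provided in addition p_k < ⋯ < p₁. -/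
/-!
Put `t = u²`. Each of the terms `D i ≤ S'ᵢ^(-pᵢ) t^pᵢ` and `C ≤ S^(-q/2) t^(q/2)` is at most its
coefficient times `t^r`, where `r = p i₀` if `t ≥ 1` and `r = q / 2` if `t < 1`, because `t^e` is
monotone in `e` (increasing for `t ≥ 1`, decreasing for `t < 1`). Summing gives `t ≤ κ t^r`, that is
`u^(2 - 2r) ≤ κ`, and since `r > 1` the exponent `2 - 2r` is negative, so `κ^(1/(2-2r)) ≤ u`.
-/

open Real Finset

lemma rpow_one_div_le_of_rpow_two_le_mul_rpow {u κ r : ℝ} (hu : 0 < u) (hr : 1 < r)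
    (h : u ^ (2 : ℝ) ≤ κ * (u ^ (2 : ℝ)) ^ r) : κ ^ (1 / (2 - 2 * r)) ≤ u := by
  rw [← rpow_mul hu.le] at h
  have hu2r : 0 < u ^ (2 * r) := rpow_pos_of_pos hu _
  have hκ : 0 < κ := pos_of_mul_pos_left ((rpow_pos_of_pos hu 2).trans_le h) hu2r.le
  have hle : u ^ (2 - 2 * r) ≤ κ := by
    rwa [rpow_sub hu, div_le_iff₀ hu2r]
  rw [one_div, rpow_inv_le_iff_of_neg hκ hu (by linarith)]
  exact hle

lemma le_mul_rpow_of_eq_sum_add {ι : Type*} (s : Finset ι) {t C b e r : ℝ} {D a p : ι → ℝ}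
    (hsum : t = ∑ i ∈ s, D i + C) (hD : ∀ i ∈ s, D i ≤ a i * t ^ p i) (hC : C ≤ b * t ^ e)
    (ha : ∀ i ∈ s, 0 ≤ a i) (hb : 0 ≤ b) (hpr : ∀ i ∈ s, t ^ p i ≤ t ^ r) (her : t ^ e ≤ t ^ r) :
    t ≤ (b + ∑ i ∈ s, a i) * t ^ r := by
  have hsum_le : ∑ i ∈ s, D i ≤ (∑ i ∈ s, a i) * t ^ r := by
    rw [sum_mul]
    exact sum_le_sum fun i hi =>
      (hD i hi).trans (mul_le_mul_of_nonneg_left (hpr i hi) (ha i hi))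
  have hC_le : C ≤ b * t ^ r := hC.trans (mul_le_mul_of_nonneg_left her hb)
  linarith

theorem nehari_norm_dichotomy_general (k : ℕ)
    (u q S κ : ℝ) (S' : Fin k → ℝ) (p : Fin k → ℝ) (D : Fin k → ℝ) (C : ℝ)
    (hu : 0 < u) (hq : 2 < q) (hS : 0 < S) (hS' : ∀ i, 0 < S' i)
    (hpq : ∀ i, q / 2 < p i)
    (hsum : u ^ (2 : ℝ) = (∑ i, D i) + C)
    (hDi : ∀ i, D i ≤ (u ^ (2 : ℝ) / S' i) ^ (p i))
    (hCb : C ≤ (u ^ (2 : ℝ) / S) ^ (q / 2))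
    (hκ : κ = S ^ (-(q / 2)) + ∑ i, (S' i) ^ (-(p i)))
    (i₀ : Fin k) (hi₀ : ∀ i, p i ≤ p i₀) :
    κ ^ (1 / (2 - 2 * p i₀)) ≤ u ∨ κ ^ (1 / (2 - q)) ≤ u := by
  set t := u ^ (2 : ℝ)
  have ht : 0 < t := rpow_pos_of_pos hu _
  have hdiv : ∀ s e : ℝ, 0 < s → (t / s) ^ e = s ^ (-e) * t ^ e := fun s e hs => by
    rw [div_rpow ht.le hs.le, rpow_neg hs.le, div_eq_inv_mul]
  have hκt : ∀ r : ℝ, (∀ i, t ^ p i ≤ t ^ r) → t ^ (q / 2) ≤ t ^ r → t ≤ κ * t ^ r :=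
    fun r hpr hqr => hκ ▸ le_mul_rpow_of_eq_sum_add univ hsum
      (fun i _ => hdiv _ _ (hS' i) ▸ hDi i) (hdiv _ _ hS ▸ hCb)
      (fun i _ => (rpow_pos_of_pos (hS' i) _).le) (rpow_pos_of_pos hS _).le
      (fun i _ => hpr i) hqr
  rcases le_or_gt 1 t with h1 | h1
  · left
    exact rpow_one_div_le_of_rpow_two_le_mul_rpow hu (by linarith [hpq i₀]) <|
      hκt _ (fun i => rpow_le_rpow_of_exponent_le h1 (hi₀ i))
        (rpow_le_rpow_of_exponent_le h1 (hpq i₀).le)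
  · right
    have h := rpow_one_div_le_of_rpow_two_le_mul_rpow hu (by linarith) <|
      hκt _ (fun i => rpow_le_rpow_of_exponent_ge ht h1.le (hpq i).le) le_rfl
    rwa [show 2 - 2 * (q / 2) = 2 - q by ring] at h

theorem nehari_norm_dichotomy (k : ℕ) (hk : 1 ≤ k)
    (u q S κ : ℝ) (S' : Fin k → ℝ) (p : Fin k → ℝ) (D : Fin k → ℝ) (C : ℝ)
    (hu : 0 < u) (hq : 2 < q) (hS : 0 < S) (hS' : ∀ i, 0 < S' i)
    (hpq : ∀ i, q / 2 < p i)
    (hpanti : StrictAnti p)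
    (hD : ∀ i, 0 ≤ D i) (hC : 0 ≤ C)
    (hsum : u ^ (2 : ℝ) = (∑ i, D i) + C)
    (hDi : ∀ i, D i ≤ (u ^ (2 : ℝ) / S' i) ^ (p i))
    (hCb : C ≤ (u ^ (2 : ℝ) / S) ^ (q / 2))
    (hκ : κ = S ^ (-(q / 2)) + ∑ i, (S' i) ^ (-(p i)))
    (i₀ : Fin k) (hi₀ : ∀ i, p i ≤ p i₀) :
    κ ^ (1 / (2 - 2 * p i₀)) ≤ u ∨ κ ^ (1 / (2 - q)) ≤ u :=
  nehari_norm_dichotomy_general k u q S κ S' p D C hu hq hS hS' hpq hsum hDi hCb hκ i₀ hi₀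
end

section
/- Let S̃ = πN(N−2)·(Γ(N/2)/Γ(N))^{2/N}. Then for every integer N ≥ 3, S̃ > 1. -/
/-!
Writing `r = Γ(N/2)/Γ(N)`, the constant is `πN(N-2) r^(2/N) ≥ N² r^(2/N) = (N^N r)^(2/N)`,
since `π > 3` gives `π(N-2) ≥ N`. It therefore suffices that `Γ(N) < N^N Γ(N/2)`, which follows
from `N Γ(N) = N! ≤ N^N` and the lower bound `Γ > 1/2` on `(0, ∞)`.
-/

open Real

namespace Real

/-- The minimum of `Γ` on `(0, ∞)` is attained at some `x₀ ∈ (1, 2)`, where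
`Γ(x₀) = Γ(x₀ + 1) / x₀ > Γ(2) / 2`. -/
theorem one_half_lt_Gamma {x : ℝ} (hx : 0 < x) : 1 / 2 < Gamma x := by
  obtain ⟨x₀, ⟨hx₀_one, hx₀_two⟩, hmin⟩ := exists_isMinOn_Gamma_Ioi
  have hx₀_pos : 0 < x₀ := one_pos.trans hx₀_one
  have hGamma_succ : Gamma 2 < Gamma (x₀ + 1) :=
    Gamma_strictMonoOn_Ici (Set.mem_Ici.mpr le_rfl) (Set.mem_Ici.mpr (by linarith)) (by linarith)
  rw [Gamma_two, Gamma_add_one hx₀_pos.ne'] at hGamma_succ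
  calc 1 / 2 < Gamma x₀ := by nlinarith [Gamma_pos_of_pos hx₀_pos]
    _ ≤ Gamma x := hmin (Set.mem_Ioi.mpr hx)

theorem Gamma_nat_add_one_le_pow (n : ℕ) : Gamma (n + 1) ≤ (n : ℝ) ^ n := by
  rw [Gamma_nat_eq_factorial]
  exact_mod_cast Nat.factorial_le_pow n

theorem Gamma_natCast_lt_pow_mul_Gamma_half {n : ℕ} (hn : 2 ≤ n) :
    Gamma n < (n : ℝ) ^ n * Gamma ((n : ℝ) / 2) := by
  have hn_pos : (0 : ℝ) < n := by positivity
  have hhalf : 1 < (n : ℝ) * Gamma ((n : ℝ) / 2) := by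
    have h2 : (2 : ℝ) ≤ n := by exact_mod_cast hn
    nlinarith [one_half_lt_Gamma (half_pos hn_pos)]
  have hmul : (n : ℝ) * Gamma n ≤ (n : ℝ) ^ n := by
    rw [← Gamma_add_one hn_pos.ne']
    exact Gamma_nat_add_one_le_pow n
  have hpow_pos : (0 : ℝ) < (n : ℝ) ^ n := by positivity
  nlinarith

end Real

theorem sq_le_pi_mul_mul_sub_two {x : ℝ} (hx : 3 ≤ x) : x ^ 2 ≤ π * x * (x - 2) := by
  have hfactor : 0 ≤ (π - 1) * (x - 3) + (π - 3) := by nlinarith [pi_gt_three]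
  nlinarith [mul_nonneg (by linarith : (0 : ℝ) ≤ x) hfactor]

theorem sobolev_constant_gt_one (N : ℕ) (hN : 3 ≤ N) :
    1 < π * (N : ℝ) * ((N : ℝ) - 2) *
      (Real.Gamma ((N : ℝ) / 2) / Real.Gamma (N : ℝ)) ^ (2 / (N : ℝ)) := by
  have hN_pos : (0 : ℝ) < N := by positivity
  set r := Real.Gamma ((N : ℝ) / 2) / Real.Gamma (N : ℝ)
  have hr : 0 ≤ r := div_nonneg (Gamma_pos_of_pos (half_pos hN_pos)).le
    (Gamma_pos_of_pos hN_pos).le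
  have hpow_mul_r : 1 < (N : ℝ) ^ N * r := by
    rw [mul_div_assoc', one_lt_div (Gamma_pos_of_pos hN_pos)]
    exact Gamma_natCast_lt_pow_mul_Gamma_half (by omega)
  calc 1 < ((N : ℝ) ^ N * r) ^ (2 / (N : ℝ)) := one_lt_rpow hpow_mul_r (by positivity)
    _ = (N : ℝ) ^ 2 * r ^ (2 / (N : ℝ)) := by
      rw [mul_rpow (by positivity) hr, ← rpow_natCast, ← rpow_mul hN_pos.le,
        mul_div_cancel₀ _ hN_pos.ne', rpow_two]
    _ ≤ π * N * (N - 2) * r ^ (2 / (N : ℝ)) := by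
      gcongr
      exact sq_le_pi_mul_mul_sub_two (by exact_mod_cast hN)
end
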